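/- arXiv:2202.00188 — 7 statements merged into one kernel-verified Lean document; each statement's English description precedes it below -/
import Mathlib

section
/- In Kleene's first algebra, for every partial multifunction g on ℕ, the partial multifunction Weih_g is computably transparent, and for every partial multifunction f on ℕ one has f ≤_W g if and only if f ≤_m Weih_g. -/
namespace KleeneOracle

/-- `e ∗ x`: application of the `e`-th partial computable function on ℕ. -/
def ap (e x : ℕ) : Part ℕ :=
  Nat.Partrec.Code.eval (Denumerable.ofNat Nat.Partrec.Code e) x

/-- `e ∗ A := {e ∗ a : a ∈ A}`. -/
def apSet (e : ℕ) (A : Set ℕ) : Set ℕ := {z | ∃ a ∈ A, z ∈ ap e a}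

/-- A partial multifunction on ℕ. -/
abbrev Multifun := ℕ → Part (Set ℕ)

def Transparent (U : Multifun) : Prop :=
  ∃ u : ℕ, ∀ (e x : ℕ) (A : Set ℕ), A ∈ U x → (∀ y ∈ A, (ap e y).Dom) →
    ∃ c ∈ ap u e, ∃ d ∈ ap c x, ∃ B ∈ U d, B ⊆ apSet e A

def Inflationary (U : Multifun) : Prop :=
  ∃ η : ℕ, ∀ x : ℕ, ∃ c ∈ ap η x, ∃ B ∈ U c, B ⊆ {x}

def mcomp (g f : Multifun) : Multifun := fun x =>
  ⟨∃ A ∈ f x, ∀ y ∈ A, (g y).Dom,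
   fun _ => {z | ∃ A ∈ f x, ∃ y ∈ A, ∃ B ∈ g y, z ∈ B}⟩

def Idempotent (U : Multifun) : Prop :=
  ∃ μ : ℕ, ∀ (x : ℕ) (A : Set ℕ), A ∈ mcomp U U x →
    ∃ c ∈ ap μ x, ∃ B ∈ U c, B ⊆ A

def mRed (f g : Multifun) : Prop :=
  ∃ e : ℕ, ∀ (x : ℕ) (A : Set ℕ), A ∈ f x →
    ∃ c ∈ ap e x, ∃ B ∈ g c, B ⊆ A

def wRed (f g : Multifun) : Prop :=
  ∃ em ep : ℕ, ∀ (x : ℕ) (A : Set ℕ), A ∈ f x →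
    ∃ c ∈ ap em x, ∃ B ∈ g c, ∀ y ∈ B, ∃ z ∈ ap ep (Nat.pair x y), z ∈ A

def Weih (g : Multifun) : Multifun := fun w =>
  ⟨∃ c ∈ ap w.unpair.1 w.unpair.2.unpair.2, ∃ B ∈ g c,
     ∀ y ∈ B, (ap w.unpair.2.unpair.1 (Nat.pair w.unpair.2.unpair.2 y)).Dom,
   fun _ => {z | ∃ c ∈ ap w.unpair.1 w.unpair.2.unpair.2, ∃ B ∈ g c,
     ∃ y ∈ B, z ∈ ap w.unpair.2.unpair.1 (Nat.pair w.unpair.2.unpair.2 y)}⟩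

def idsq (g : Multifun) : Multifun := fun w =>
  if w.unpair.1 = 0 then Part.some {w.unpair.2}
  else if w.unpair.1 = 1 then g w.unpair.2
  else Part.none

def pWeih (g : Multifun) : Multifun := Weih (idsq g)

def pwRed (f g : Multifun) : Prop := wRed f (idsq g)

def Med (Q : Set ℕ) : Multifun := fun e =>
  ⟨∀ a ∈ Q, (ap e a).Dom, fun _ => apSet e Q⟩

def MedRed (P Q : Set ℕ) : Prop :=
  ∃ e : ℕ, (∀ a ∈ Q, (ap e a).Dom) ∧ apSet e Q ⊆ P

def constMF (P : Set ℕ) : Multifun := fun _ => Part.some P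

def imp (p q : Set ℕ) : Set ℕ := {e | ∀ x ∈ p, ∃ z ∈ ap e x, z ∈ q}

def OpMonotone (j : Set ℕ → Set ℕ) : Prop :=
  ∃ u : ℕ, ∀ p q : Set ℕ, ∀ a ∈ imp p q, ∃ c ∈ ap u a, c ∈ imp (j p) (j q)

def OpInflationary (j : Set ℕ → Set ℕ) : Prop :=
  ∃ e : ℕ, ∀ p : Set ℕ, e ∈ imp p (j p)

def OpIdempotent (j : Set ℕ → Set ℕ) : Prop :=
  ∃ e : ℕ, ∀ p : Set ℕ, e ∈ imp (j (j p)) (j p)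

def LawvereTierney (j : Set ℕ → Set ℕ) : Prop :=
  OpMonotone j ∧ OpInflationary j ∧ OpIdempotent j

def jU (U : Multifun) (p : Set ℕ) : Set ℕ := {x | ∃ A ∈ U x, A ⊆ p}

def SingleValued (U : Multifun) : Prop := ∀ x : ℕ, ∀ A ∈ U x, ∃ y : ℕ, A = {y}

def presInter (j : Set ℕ → Set ℕ) : Prop :=
  ∀ (ι : Type) [Nonempty ι] (p : ι → Set ℕ), j (⋂ i, p i) = ⋂ i, j (p i)

def presUnion (j : Set ℕ → Set ℕ) : Prop :=
  ∀ (ι : Type) (p : ι → Set ℕ), j (⋃ i, p i) = ⋃ i, j (p i)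

def Uop (j : Set ℕ → Set ℕ) : Multifun := fun x =>
  ⟨∃ p : Set ℕ, x ∈ j p, fun _ => ⋂₀ {p : Set ℕ | x ∈ j p}⟩

def mMorphism (e : ℕ) (f g : Multifun) : Prop :=
  ∀ (x : ℕ) (A : Set ℕ), A ∈ f x → ∃ c ∈ ap e x, ∃ B ∈ g c, B ⊆ A

def rMorphism (e : ℕ) (j k : Set ℕ → Set ℕ) : Prop :=
  ∀ p : Set ℕ, e ∈ imp (j p) (k p)

def rRed (j k : Set ℕ → Set ℕ) : Prop := ∃ e : ℕ, rMorphism e j k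


/-!
`Weih g ⟨h, k, x⟩` is the set `k ∗ ({x} × g (h ∗ x))`. Post-composing it with `e` amounts to
replacing `k` by `e ∘ k`, an index obtained computably from `e` by s-m-n, which gives
transparency. A Weihrauch reduction `(φ₋, φ₊)` is the many-one reduction `x ↦ ⟨φ₋, φ₊, x⟩` into
`Weih g`; conversely, if `m ∗ x = ⟨h, k, x'⟩` then `x ↦ h ∗ x'` and `⟨x, y⟩ ↦ k ∗ ⟨x', y⟩` form a
Weihrauch reduction.
-/

open Nat.Partrec (Code)
open Nat.Partrec.Code

theorem ap_partrec₂ : Partrec₂ ap :=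
  eval_part.comp ((Computable.ofNat _).comp Computable.fst) Computable.snd

theorem exists_ap_eq {f : ℕ →. ℕ} (hf : Partrec f) : ∃ e : ℕ, ∀ x, ap e x = f x := by
  obtain ⟨c, hc⟩ := exists_code.1 (Partrec.nat_iff.1 hf)
  exact ⟨Encodable.encode c, fun x => by simp [ap, hc]⟩

theorem exists_ap_curry {f : ℕ → ℕ →. ℕ} (hf : Partrec₂ f) :
    ∃ u : ℕ, ∀ e, ∃ c ∈ ap u e, ∀ x, ap c x = f e x := by
  have hf' : Partrec fun n : ℕ => f n.unpair.1 n.unpair.2 :=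
    hf.comp (Computable.fst.comp Computable.unpair) (Computable.snd.comp Computable.unpair)
  obtain ⟨c, hc⟩ := exists_code.1 (Partrec.nat_iff.1 hf')
  have hs : Computable fun e => Encodable.encode (curry c e) :=
    (Primrec.encode.comp (primrec₂_curry.comp (Primrec.const c) Primrec.id)).to_comp
  obtain ⟨u, hu⟩ := exists_ap_eq hs.partrec
  exact ⟨u, fun e => ⟨Encodable.encode (curry c e), by simp [hu],
    fun x => by simp [ap, eval_curry, hc]⟩⟩

theorem exists_ap_comp :
    ∃ s : ℕ → ℕ → ℕ, Computable₂ s ∧ ∀ e k x, ap (s e k) x = (ap k x).bind (ap e) :=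
  ⟨fun e k => Encodable.encode (Code.comp (Denumerable.ofNat Code e) (Denumerable.ofNat Code k)),
    (Primrec.encode.comp (primrec₂_comp.comp ((Primrec.ofNat Code).comp Primrec.fst)
      ((Primrec.ofNat Code).comp Primrec.snd))).to_comp,
    fun e k x => by simp only [ap, Denumerable.ofNat_encode, eval]; rfl⟩

theorem exists_eq_pair_pair (w : ℕ) : ∃ h k x, w = Nat.pair h (Nat.pair k x) :=
  ⟨w.unpair.1, w.unpair.2.unpair.1, w.unpair.2.unpair.2, by simp only [Nat.pair_unpair]⟩

theorem mem_weih_pair_iff {g : Multifun} {h k x : ℕ} {A : Set ℕ} :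
    A ∈ Weih g (Nat.pair h (Nat.pair k x)) ↔
      ∃ c ∈ ap h x, ∃ B ∈ g c, (∀ y ∈ B, (ap k (Nat.pair x y)).Dom) ∧
        A = {z | ∃ y ∈ B, z ∈ ap k (Nat.pair x y)} := by
  have hval : ∀ c ∈ ap h x, ∀ B ∈ g c,
      {z | ∃ c ∈ ap h x, ∃ B ∈ g c, ∃ y ∈ B, z ∈ ap k (Nat.pair x y)} =
        {z | ∃ y ∈ B, z ∈ ap k (Nat.pair x y)} := by
    intro c hc B hB
    ext z
    constructor
    · rintro ⟨c', hc', B', hB', hz⟩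
      obtain rfl := Part.mem_unique hc' hc
      obtain rfl := Part.mem_unique hB' hB
      exact hz
    · exact fun hz => ⟨c, hc, B, hB, hz⟩
  simp only [Weih, Nat.unpair_pair, Part.mem_mk_iff]
  constructor
  · rintro ⟨⟨c, hc, B, hB, hdom⟩, rfl⟩
    exact ⟨c, hc, B, hB, hdom, hval c hc B hB⟩
  · rintro ⟨c, hc, B, hB, hdom, rfl⟩
    exact ⟨⟨c, hc, B, hB, hdom⟩, hval c hc B hB⟩

theorem weih_transparent (g : Multifun) : Transparent (Weih g) := by
  obtain ⟨s, hs, hs_ap⟩ := exists_ap_comp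
  have hfst : Computable fun n : ℕ => n.unpair.1 := Computable.fst.comp Computable.unpair
  have hsnd : Computable fun n : ℕ => n.unpair.2 := Computable.snd.comp Computable.unpair
  have hpost : Computable₂ fun e w : ℕ =>
      Nat.pair w.unpair.1 (Nat.pair (s e w.unpair.2.unpair.1) w.unpair.2.unpair.2) :=
    Primrec₂.natPair.to_comp.comp (hfst.comp Computable.snd) <| Primrec₂.natPair.to_comp.comp
      (hs.comp Computable.fst (hfst.comp (hsnd.comp Computable.snd)))
      (hsnd.comp (hsnd.comp Computable.snd))
  obtain ⟨u, hu⟩ := exists_ap_curry hpost.partrec₂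
  refine ⟨u, fun e w A hA he => ?_⟩
  obtain ⟨c', hc', hc'_ap⟩ := hu e
  obtain ⟨h, k, x, rfl⟩ := exists_eq_pair_pair w
  obtain ⟨c, hc, B, hB, hk, rfl⟩ := mem_weih_pair_iff.1 hA
  refine ⟨c', hc', Nat.pair h (Nat.pair (s e k) x), by simp [hc'_ap], _,
    mem_weih_pair_iff.2 ⟨c, hc, B, hB, fun y hy => ?_, rfl⟩, ?_⟩
  · obtain ⟨z, hz⟩ := Part.dom_iff_mem.1 (hk y hy)
    obtain ⟨z', hz'⟩ := Part.dom_iff_mem.1 (he z ⟨y, hy, hz⟩)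
    rw [hs_ap]
    exact Part.dom_iff_mem.2 ⟨z', Part.mem_bind_iff.2 ⟨z, hz, hz'⟩⟩
  · rintro z ⟨y, hy, hz⟩
    rw [hs_ap] at hz
    obtain ⟨a, ha, hza⟩ := Part.mem_bind_iff.1 hz
    exact ⟨a, ⟨y, hy, ha⟩, hza⟩

theorem mRed_weih_of_wRed {f g : Multifun} (hfg : wRed f g) : mRed f (Weih g) := by
  obtain ⟨em, ep, hred⟩ := hfg
  have hinst : Computable fun x => Nat.pair em (Nat.pair ep x) :=
    (Primrec₂.natPair.comp (Primrec.const em)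
      (Primrec₂.natPair.comp (Primrec.const ep) Primrec.id)).to_comp
  obtain ⟨m, hm⟩ := exists_ap_eq hinst.partrec
  refine ⟨m, fun x A hA => ?_⟩
  obtain ⟨c, hc, B, hB, hep⟩ := hred x A hA
  have hdom : ∀ y ∈ B, (ap ep (Nat.pair x y)).Dom := fun y hy =>
    let ⟨z, hz, _⟩ := hep y hy
    Part.dom_iff_mem.2 ⟨z, hz⟩
  refine ⟨_, by simp [hm], _, mem_weih_pair_iff.2 ⟨c, hc, B, hB, hdom, rfl⟩, ?_⟩
  rintro z ⟨y, hy, hz⟩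
  obtain ⟨z', hz', hz'A⟩ := hep y hy
  rwa [Part.mem_unique hz hz']

theorem wRed_of_mRed_weih {f g : Multifun} (hfg : mRed f (Weih g)) : wRed f g := by
  obtain ⟨m, hred⟩ := hfg
  have hfst : Computable fun n : ℕ => n.unpair.1 := Computable.fst.comp Computable.unpair
  have hsnd : Computable fun n : ℕ => n.unpair.2 := Computable.snd.comp Computable.unpair
  have hm : Computable fun _ : ℕ => m := Computable.const m
  obtain ⟨em, hem⟩ := exists_ap_eq (f := fun x => (ap m x).bind fun w =>
      ap w.unpair.1 w.unpair.2.unpair.2)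
    ((ap_partrec₂.comp hm Computable.id).bind
      (ap_partrec₂.comp (hfst.comp Computable.snd) (hsnd.comp (hsnd.comp Computable.snd))).to₂)
  obtain ⟨ep, hep⟩ := exists_ap_eq (f := fun v => (ap m v.unpair.1).bind fun w =>
      ap w.unpair.2.unpair.1 (Nat.pair w.unpair.2.unpair.2 v.unpair.2))
    ((ap_partrec₂.comp hm hfst).bind
      (ap_partrec₂.comp (hfst.comp (hsnd.comp Computable.snd))
        (Primrec₂.natPair.to_comp.comp (hsnd.comp (hsnd.comp Computable.snd))
          (hsnd.comp Computable.fst))).to₂)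
  refine ⟨em, ep, fun x A hA => ?_⟩
  obtain ⟨w, hw, B', hB', hB'A⟩ := hred x A hA
  obtain ⟨h, k, x', rfl⟩ := exists_eq_pair_pair w
  obtain ⟨c, hc, B, hB, hk, rfl⟩ := mem_weih_pair_iff.1 hB'
  refine ⟨c, ?_, B, hB, fun y hy => ?_⟩
  · rw [hem]
    exact Part.mem_bind_iff.2 ⟨_, hw, by simpa only [Nat.unpair_pair] using hc⟩
  · obtain ⟨z, hz⟩ := Part.dom_iff_mem.1 (hk y hy)
    refine ⟨z, ?_, hB'A ⟨y, hy, hz⟩⟩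
    rw [hep]
    simp only [Nat.unpair_pair]
    exact Part.mem_bind_iff.2 ⟨_, hw, by simpa only [Nat.unpair_pair] using hz⟩

/-- For every partial multifunction `g` on ℕ, `Weih g` is computably
transparent, and for every partial multifunction `f`, `f ≤_W g ↔ f ≤_m Weih g`. -/
theorem weih_transparent_and_universal (g : Multifun) :
    Transparent (Weih g) ∧ ∀ f : Multifun, (wRed f g ↔ mRed f (Weih g)) :=
  ⟨weih_transparent g, fun _ => ⟨mRed_weih_of_wRed, wRed_of_mRed_weih⟩⟩

end KleeneOracle
end

section
/- For every Q ⊆ ℕ, the partial multifunction Med_Q is computably transparent; and for every P ⊆ ℕ, the total constant multifunction c_P (with c_P(x) = P for every x ∈ ℕ) satisfies c_P ≤_m Med_Q if and only if P ≤_M Q. -/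
namespace KleeneOracle

/-! The index of `φ_e ∘ φ_x` is computable from `e` and `x`, curried in `x` by the s-m-n
theorem, and `Med_Q` at that index is `e ∗ (x ∗ Q)`; this gives transparency. A many-one
reduction of a constant multifunction is determined by its value at a single input, i.e. by one
index `c` whose `Med_Q`-value `c ∗ Q` lies in `P`, which is a Medvedev reduction. -/

open Nat.Partrec (Code)

lemma ap_encode (c : Code) (x : ℕ) : ap (Encodable.encode c) x = c.eval x := by
  simp [ap]

def compIdx (e x : ℕ) : ℕ :=
  Encodable.encode ((Denumerable.ofNat Code e).comp (Denumerable.ofNat Code x))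

lemma ap_compIdx (e x a : ℕ) : ap (compIdx e x) a = (ap x a).bind (ap e) := by
  rw [compIdx, ap_encode]; rfl

lemma apSet_compIdx (e x : ℕ) (A : Set ℕ) :
    apSet (compIdx e x) A = apSet e (apSet x A) := by
  ext z
  simp only [apSet, ap_compIdx, Part.mem_bind_iff]
  constructor
  · rintro ⟨a, ha, y, hy, hz⟩; exact ⟨y, ⟨a, ha, hy⟩, hz⟩
  · rintro ⟨y, ⟨a, ha, hy⟩, hz⟩; exact ⟨a, ha, y, hy, hz⟩

lemma dom_ap_compIdx {e x : ℕ} {A : Set ℕ} (hx : ∀ a ∈ A, (ap x a).Dom)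
    (he : ∀ y ∈ apSet x A, (ap e y).Dom) : ∀ a ∈ A, (ap (compIdx e x) a).Dom := by
  intro a ha
  obtain ⟨y, hy⟩ := Part.dom_iff_mem.1 (hx a ha)
  obtain ⟨z, hz⟩ := Part.dom_iff_mem.1 (he y ⟨a, ha, hy⟩)
  rw [ap_compIdx]
  exact Part.dom_iff_mem.2 ⟨z, Part.mem_bind_iff.2 ⟨y, hy, hz⟩⟩

lemma exists_index_curry_compIdx : ∃ u : ℕ, ∀ e x : ℕ, ∃ c ∈ ap u e, compIdx e x ∈ ap c x := by
  have hcomp : Primrec fun n : ℕ => compIdx n.unpair.1 n.unpair.2 :=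
    Primrec.encode.comp <| Code.primrec₂_comp.comp
      ((Primrec.ofNat Code).comp (Primrec.fst.comp Primrec.unpair))
      ((Primrec.ofNat Code).comp (Primrec.snd.comp Primrec.unpair))
  obtain ⟨cf, hcf⟩ := Code.exists_code.1 hcomp.to_comp.partrec
  have hcurry : Primrec fun e : ℕ => Encodable.encode (cf.curry e) :=
    Primrec.encode.comp (Code.primrec₂_curry.comp (Primrec.const cf) Primrec.id)
  obtain ⟨cu, hcu⟩ := Code.exists_code.1 hcurry.to_comp.partrec
  refine ⟨Encodable.encode cu, fun e x => ⟨Encodable.encode (cf.curry e), ?_, ?_⟩⟩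
  · simp [ap_encode, hcu]
  · simp [ap_encode, Code.eval_curry, hcf]

lemma mem_med {Q : Set ℕ} {x : ℕ} {A : Set ℕ} :
    A ∈ Med Q x ↔ (∀ a ∈ Q, (ap x a).Dom) ∧ A = apSet x Q := by
  constructor <;> rintro ⟨h, rfl⟩ <;> exact ⟨h, rfl⟩

theorem transparent_med (Q : Set ℕ) : Transparent (Med Q) := by
  obtain ⟨u, hu⟩ := exists_index_curry_compIdx
  refine ⟨u, fun e x A hA he => ?_⟩
  obtain ⟨hx, rfl⟩ := mem_med.1 hA
  obtain ⟨c, hc, hcx⟩ := hu e x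
  exact ⟨c, hc, compIdx e x, hcx, _, mem_med.2 ⟨dom_ap_compIdx hx he, rfl⟩,
    (apSet_compIdx e x Q).subset⟩

theorem mRed_constMF_iff {P : Set ℕ} {g : Multifun} :
    mRed (constMF P) g ↔ ∃ c, ∃ B ∈ g c, B ⊆ P := by
  constructor
  · rintro ⟨e, he⟩
    obtain ⟨c, -, hc⟩ := he 0 P (Part.mem_some P)
    exact ⟨c, hc⟩
  · rintro ⟨c, hc⟩
    refine ⟨Encodable.encode (Code.const c), fun x A hA => ?_⟩
    rw [Part.mem_some_iff.1 hA]
    exact ⟨c, by simp [ap_encode], hc⟩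

theorem medRed_iff_exists_med_subset {P Q : Set ℕ} :
    MedRed P Q ↔ ∃ c, ∃ B ∈ Med Q c, B ⊆ P := by
  simp only [MedRed, mem_med]
  constructor
  · rintro ⟨e, he, hP⟩; exact ⟨e, _, ⟨he, rfl⟩, hP⟩
  · rintro ⟨e, _, ⟨he, rfl⟩, hP⟩; exact ⟨e, he, hP⟩

/-- For every `Q ⊆ ℕ`, `Med Q` is computably transparent, and for every
`P ⊆ ℕ` the total constant multifunction `c_P` satisfies `c_P ≤_m Med Q ↔ P ≤_M Q`. -/
theorem med_transparent_and_medvedev (Q : Set ℕ) :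
    Transparent (Med Q) ∧
    ∀ P : Set ℕ, (mRed (constMF P) (Med Q) ↔ MedRed P Q) :=
  ⟨transparent_med Q, fun _ => mRed_constMF_iff.trans medRed_iff_exists_med_subset.symm⟩

end KleeneOracle
end

section
/- (i) For every operation j : Ω → Ω preserving arbitrary intersections, one has: for every x ∈ dom(U_j), x ∈ j(p) if and only if U_j(x) ⊆ p; and j_{U_j} = j. (ii) For every partial multifunction U on ℕ, U_{j_U} = U (they have the same domain and the same values). -/
namespace KleeneOracle

/-- (i) for every intersection-preserving `j`: for all `x ∈ dom (U_j)`,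
`x ∈ j p ↔ U_j x ⊆ p`, and `j_{U_j} = j`; (ii) for every partial multifunction `U`,
`U_{j_U} = U`. -/
theorem jU_Uop_inverse :
    (∀ j : Set ℕ → Set ℕ, presInter j →
      (∀ (x : ℕ) (A : Set ℕ), A ∈ Uop j x → ∀ p : Set ℕ, (x ∈ j p ↔ A ⊆ p)) ∧
      jU (Uop j) = j) ∧
    (∀ U : Multifun, Uop (jU U) = U) := by
  constructor
  · intro j hj
    -- monotonicity from presInter
    have mono : ∀ p q : Set ℕ, p ⊆ q → j p ⊆ j q := by
      intro p q hpq
      have h := hj (ULift Bool) (fun i => if i.down then p else q)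
      have hinter : (⋂ i : ULift Bool, (if i.down then p else q)) = p := by
        apply subset_antisymm
        · intro x hx
          have := Set.mem_iInter.mp hx ⟨true⟩
          simpa using this
        · intro x hx
          apply Set.mem_iInter.mpr
          intro i
          cases i with
          | up b => cases b <;> simp [hpq hx, hx]
      rw [hinter] at h
      intro x hx
      have : x ∈ ⋂ i : ULift Bool, j (if i.down then p else q) := h ▸ hx
      have := Set.mem_iInter.mp this ⟨false⟩
      simpa using this
    have key : ∀ (x : ℕ) (A : Set ℕ), A ∈ Uop j x → ∀ p : Set ℕ, (x ∈ j p ↔ A ⊆ p) := by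
      intro x A hA p
      obtain ⟨hdom, hget⟩ := hA
      subst hget
      constructor
      · intro hxp
        exact fun y hy => hy p hxp
      · intro hsub
        -- show x ∈ j (⋂₀ ...)
        obtain ⟨q, hq⟩ := hdom
        have hne : Nonempty {r : Set ℕ // x ∈ j r} := ⟨⟨q, hq⟩⟩
        have h := hj {r : Set ℕ // x ∈ j r} (fun r => r.1)
        have hA : (⋂ r : {r : Set ℕ // x ∈ j r}, r.1) = ⋂₀ {p : Set ℕ | x ∈ j p} := by
          ext y; simp [Set.mem_sInter]
        have hx : x ∈ j (⋂₀ {p : Set ℕ | x ∈ j p}) := by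
          rw [← hA, h]
          exact Set.mem_iInter.mpr fun r => r.2
        exact mono _ _ hsub hx
    refine ⟨key, ?_⟩
    funext p
    ext x
    constructor
    · rintro ⟨A, hA, hsub⟩
      exact (key x A hA p).mpr hsub
    · intro hx
      have hdom : ∃ q : Set ℕ, x ∈ j q := ⟨p, hx⟩
      refine ⟨_, ⟨hdom, rfl⟩, ?_⟩
      exact (key x _ ⟨hdom, rfl⟩ p).mp hx
  · intro U
    funext x
    apply Part.ext'
    · constructor
      · rintro ⟨q, A, hA, _⟩
        exact Part.dom_iff_mem.mpr ⟨A, hA⟩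
      · intro h
        exact ⟨Set.univ, (U x).get h, Part.get_mem h, Set.subset_univ _⟩
    · intro h1 h2
      show (⋂₀ {p : Set ℕ | ∃ A ∈ U x, A ⊆ p}) = (U x).get h2
      apply subset_antisymm
      · intro y hy
        exact hy _ ⟨(U x).get h2, Part.get_mem h2, fun _ hz => hz⟩
      · intro y hy p hp
        obtain ⟨A, hA, hsub⟩ := hp
        have : A = (U x).get h2 := Part.mem_unique hA (Part.get_mem h2)
        exact hsub (this ▸ hy)

end KleeneOracle
end

section
/- Let j : Ω → Ω preserve arbitrary intersections. If j is monotone, then U_j is computably transparent; if j is inflationary, then U_j is inflationary; if j is monotone and idempotent, then U_j is idempotent; and if j moreover preserves arbitrary unions, then U_j is single-valued. -/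
namespace KleeneOracle

/-- let `j` preserve arbitrary intersections.  If `j` is monotone then
`U_j` is computably transparent; if `j` is inflationary then so is `U_j`; if `j` is
monotone and idempotent then `U_j` is idempotent; if moreover `j` preserves arbitrary
unions then `U_j` is single-valued. -/
theorem modality_to_oracle (j : Set ℕ → Set ℕ) (hj : presInter j) :
    (OpMonotone j → Transparent (Uop j)) ∧
    (OpInflationary j → Inflationary (Uop j)) ∧
    (OpMonotone j → OpIdempotent j → Idempotent (Uop j)) ∧
    (presUnion j → SingleValued (Uop j)) := by
  have hinter : ∀ p q : Set ℕ, j (p ∩ q) = j p ∩ j q := by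
    intro p q
    have h := hj Bool (fun b => if b then p else q)
    have h1 : (⋂ b : Bool, (if b then p else q)) = p ∩ q := by
      ext z; simp [Set.mem_iInter, Bool.forall_bool, and_comm]
    have h2 : (⋂ b : Bool, j (if b then p else q)) = j p ∩ j q := by
      ext z; simp [Set.mem_iInter, Bool.forall_bool, and_comm]
    rw [h1, h2] at h; exact h
  have hmono : ∀ p q : Set ℕ, p ⊆ q → j p ⊆ j q := by
    intro p q h z hz
    have hz' : z ∈ j (p ∩ q) := by rw [Set.inter_eq_left.2 h]; exact hz
    rw [hinter] at hz'; exact hz'.2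
  have hself : ∀ x : ℕ, (∃ p, x ∈ j p) → x ∈ j (⋂₀ {p | x ∈ j p}) := by
    intro x hx
    obtain ⟨p0, hp0⟩ := hx
    haveI : Nonempty {p : Set ℕ // x ∈ j p} := ⟨⟨p0, hp0⟩⟩
    have heq : ⋂₀ {p : Set ℕ | x ∈ j p} = ⋂ i : {p : Set ℕ // x ∈ j p}, i.1 := by
      ext z; simp [Set.mem_sInter, Set.mem_iInter, Subtype.forall]
    rw [heq, hj]
    exact Set.mem_iInter.2 fun i => i.2
  have hUmem : ∀ (x : ℕ) (A : Set ℕ), A ∈ Uop j x →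
      (∃ p, x ∈ j p) ∧ A = ⋂₀ {p | x ∈ j p} := by
    intro x A hA
    obtain ⟨h, hA⟩ := hA
    exact ⟨h, hA.symm⟩
  have hUself : ∀ (d : ℕ) (p : Set ℕ), d ∈ j p →
      ∃ B ∈ Uop j d, B ⊆ p := by
    intro d p hdp
    exact ⟨⋂₀ {q | d ∈ j q}, ⟨⟨p, hdp⟩, rfl⟩, Set.sInter_subset_of_mem hdp⟩
  refine ⟨?_, ?_, ?_, ?_⟩
  · -- Transparent
    rintro ⟨u, hu⟩
    refine ⟨u, ?_⟩
    intro e x A hA hdom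
    obtain ⟨hx, rfl⟩ := hUmem x A hA
    have he : e ∈ imp (⋂₀ {p | x ∈ j p}) (apSet e (⋂₀ {p | x ∈ j p})) := by
      intro y hy
      obtain ⟨z, hz⟩ := Part.dom_iff_mem.1 (hdom y hy)
      exact ⟨z, hz, ⟨y, hy, hz⟩⟩
    obtain ⟨c, hc, hcimp⟩ := hu _ _ e he
    obtain ⟨d, hd, hdj⟩ := hcimp x (hself x hx)
    obtain ⟨B, hB, hBsub⟩ := hUself d _ hdj
    exact ⟨c, hc, d, hd, B, hB, hBsub⟩
  · -- Inflationary
    rintro ⟨η, hη⟩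
    refine ⟨η, fun x => ?_⟩
    obtain ⟨c, hc, hcj⟩ := hη {x} x rfl
    obtain ⟨B, hB, hBsub⟩ := hUself c _ hcj
    exact ⟨c, hc, B, hB, hBsub⟩
  · -- Idempotent
    rintro _ ⟨μ, hμ⟩
    refine ⟨μ, ?_⟩
    intro x A hA
    obtain ⟨hD, hA⟩ := hA
    subst hA
    obtain ⟨A₀, hA₀, hAll⟩ := hD
    set A : Set ℕ :=
      {z | ∃ A₀ ∈ Uop j x, ∃ y ∈ A₀, ∃ B ∈ Uop j y, z ∈ B} with hAdef
    obtain ⟨hx, rfl⟩ := hUmem x A₀ hA₀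
    have hsub : (⋂₀ {p | x ∈ j p}) ⊆ j A := by
      intro y hy
      have hyd : ∃ p, y ∈ j p := hAll y hy
      have hyA : (⋂₀ {q | y ∈ j q}) ⊆ A := by
        intro z hz
        exact ⟨⋂₀ {p | x ∈ j p}, ⟨hx, rfl⟩, y, hy, ⋂₀ {q | y ∈ j q}, ⟨hyd, rfl⟩, hz⟩
      exact hmono _ _ hyA (hself y hyd)
    have hxjj : x ∈ j (j A) := hmono _ _ hsub (hself x hx)
    obtain ⟨c, hc, hcj⟩ := hμ A x hxjj
    obtain ⟨B, hB, hBsub⟩ := hUself c _ hcj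
    exact ⟨c, hc, B, hB, hBsub⟩
  · -- SingleValued
    intro hpu x A hA
    obtain ⟨⟨p, hp⟩, rfl⟩ := hUmem x A hA
    have hjempty : j ∅ = ∅ := by
      have h := hpu Empty (fun i => i.elim)
      simpa using h
    have hpne : p.Nonempty := by
      rcases Set.eq_empty_or_nonempty p with h | h
      · rw [h, hjempty] at hp; exact absurd hp (Set.notMem_empty x)
      · exact h
    have hy : ∃ y ∈ p, x ∈ j {y} := by
      have h := hpu p (fun y => {(y : ℕ)})
      have h1 : (⋃ y : p, ({(y : ℕ)} : Set ℕ)) = p := by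
        ext z; simp
      rw [h1] at h
      rw [h] at hp
      obtain ⟨s, ⟨y, rfl⟩, hs⟩ := hp
      exact ⟨y, y.2, hs⟩
    obtain ⟨y, hyp, hxy⟩ := hy
    refine ⟨y, Set.Subset.antisymm (Set.sInter_subset_of_mem hxy) ?_⟩
    intro z hz
    rw [Set.mem_singleton_iff] at hz
    rw [hz]
    intro q hq
    have hxq : x ∈ j ({y} ∩ q) := by rw [hinter]; exact ⟨hxy, hq⟩
    by_contra hyq
    have : ({y} : Set ℕ) ∩ q = ∅ := by
      ext w; simp only [Set.mem_inter_iff, Set.mem_singleton_iff, Set.mem_empty_iff_false,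
        iff_false, not_and]
      rintro rfl; exact hyq
    rw [this, hjempty] at hxq
    exact hxq

end KleeneOracle
end

section
/- If e ∈ ℕ is an m-morphism from a partial multifunction f to a partial multifunction g on ℕ, then e is an r-morphism from j_f to j_g. Conversely, if j,k : Ω → Ω preserve arbitrary intersections and e ∈ ℕ is an r-morphism from j to k, then e is an m-morphism from U_j to U_k. -/
namespace KleeneOracle

/-- every m-morphism `e : f → g` is an r-morphism `e : j_f → j_g`;
conversely, if `j, k` preserve arbitrary intersections, every r-morphism `e : j → k`
is an m-morphism `e : U_j → U_k`. -/
theorem morphism_correspondence :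
    (∀ (f g : Multifun) (e : ℕ), mMorphism e f g → rMorphism e (jU f) (jU g)) ∧
    (∀ j k : Set ℕ → Set ℕ, presInter j → presInter k →
      ∀ e : ℕ, rMorphism e j k → mMorphism e (Uop j) (Uop k)) := by
  constructor
  · intro f g e hm p x hx
    obtain ⟨A, hAf, hAp⟩ := hx
    obtain ⟨c, hc, B, hBg, hBA⟩ := hm x A hAf
    exact ⟨c, hc, B, hBg, hBA.trans hAp⟩
  · intro j k hj hk e hr x A hA
    obtain ⟨hdom, hget⟩ := hA
    have hAeq : A = ⋂₀ {p : Set ℕ | x ∈ j p} := hget.symm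
    have hne : Nonempty {p : Set ℕ // x ∈ j p} := ⟨⟨hdom.choose, hdom.choose_spec⟩⟩; have hne2 : Nonempty (↥{p : Set ℕ | x ∈ j p}) := hne
    have hxjA : x ∈ j A := by
      rw [hAeq, Set.sInter_eq_iInter, hj (↥{p : Set ℕ | x ∈ j p}) (fun i => i.1)]
      exact Set.mem_iInter.mpr fun i => i.2
    obtain ⟨c, hc, hckA⟩ := hr A x hxjA
    refine ⟨c, hc, ⋂₀ {p : Set ℕ | c ∈ k p}, ⟨⟨A, hckA⟩, rfl⟩, ?_⟩
    exact Set.sInter_subset_of_mem hckA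

end KleeneOracle
end

section
/- For all partial multifunctions f,g on ℕ: f ≤_m g if and only if j_f ≤_r j_g; and every operation j : Ω → Ω preserving arbitrary intersections equals j_{U_j}. Hence the map U ↦ j_U induces an isomorphism between the many-one degrees of partial multifunctions on ℕ and the r-degrees of operations on Ω preserving arbitrary intersections. -/
namespace KleeneOracle

/-- `f ≤_m g ↔ j_f ≤_r j_g`, and every intersection-preserving `j`
equals `j_{U_j}`.  Hence `U ↦ j_U` induces an isomorphism between the many-one degrees
of partial multifunctions and the r-degrees of intersection-preserving operations. -/
theorem mdeg_rdeg_isomorphism :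
    (∀ f g : Multifun, mRed f g ↔ rRed (jU f) (jU g)) ∧
    (∀ j : Set ℕ → Set ℕ, presInter j → jU (Uop j) = j) := by
  constructor
  · intro f g
    constructor
    · rintro ⟨e, he⟩
      refine ⟨e, fun p x hx => ?_⟩
      obtain ⟨A, hA, hAp⟩ := hx
      obtain ⟨c, hc, B, hB, hBA⟩ := he x A hA
      exact ⟨c, hc, B, hB, hBA.trans hAp⟩
    · rintro ⟨e, he⟩
      refine ⟨e, fun x A hA => ?_⟩
      obtain ⟨c, hc, B, hB, hBA⟩ := he A x ⟨A, hA, subset_rfl⟩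
      exact ⟨c, hc, B, hB, hBA⟩
  · intro j hj
    have hmono : ∀ a b : Set ℕ, a ⊆ b → j a ⊆ j b := by
      intro a b hab
      have h := hj Bool (fun t => if t then a else b)
      have h1 : (⋂ t : Bool, if t then a else b) = a := by
        ext z
        simp only [Set.mem_iInter, Bool.forall_bool, if_true, if_false]
        exact ⟨fun ⟨h1, h2⟩ => h2, fun hz => ⟨hab hz, hz⟩⟩
      rw [h1] at h
      intro z hz
      have : z ∈ ⋂ t : Bool, j (if t then a else b) := h ▸ hz
      have := Set.mem_iInter.mp this false
      simpa using this
    funext p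
    ext x
    constructor
    · rintro ⟨A, hA, hAp⟩
      obtain ⟨⟨q, hq⟩, rfl⟩ := hA
      set S : Set (Set ℕ) := {r : Set ℕ | x ∈ j r} with hS
      have hxS : x ∈ j (⋂₀ S) := by
        haveI hne : Nonempty S := ⟨⟨q, hq⟩⟩
        have h := hj S (fun i => (i : Set ℕ))
        rw [Set.sInter_eq_iInter, h, Set.mem_iInter]
        exact fun i => i.2
      exact hmono _ _ hAp hxS
    · intro hx
      exact ⟨⋂₀ {r : Set ℕ | x ∈ j r}, ⟨⟨p, hx⟩, rfl⟩,
        Set.sInter_subset_of_mem hx⟩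

end KleeneOracle
end

section
/- For every m.m. map U on ℕ, j_{U ∘ U} = j_U ∘ j_U, where j_U ∘ j_U denotes the composite operation p ↦ j_U(j_U(p)) on Ω and U ∘ U is the composition of the m.m. map U with itself. -/
namespace KleeneOracle

/-- An m.m. map with secret set `Λ`: a partial multifunction from `ℕ × Λ`
(public input in ℕ, secret input in Λ) to subsets of ℕ. -/
abbrev MMmap (Λ : Type) := ℕ → Λ → Part (Set ℕ)

/-- Extended many-one reducibility `f ≤_em g`. -/
def emRed {Λ Λ' : Type} (f : MMmap Λ) (g : MMmap Λ') : Prop :=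
  ∃ e : ℕ, ∀ (x : ℕ) (p : Λ) (A : Set ℕ), A ∈ f x p →
    ∃ c ∈ ap e x, ∃ (q : Λ') (B : Set ℕ), B ∈ g c q ∧ B ⊆ A

/-- An m.m. map is computably transparent. -/
def MMTransparent {Λ : Type} (U : MMmap Λ) : Prop :=
  ∃ u : ℕ, ∀ (e x : ℕ) (p : Λ) (A : Set ℕ), A ∈ U x p →
    (∀ y ∈ A, (ap e y).Dom) →
    ∃ c ∈ ap u e, ∃ d ∈ ap c x, ∃ (q : Λ) (B : Set ℕ), B ∈ U d q ∧ B ⊆ apSet e A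

/-- Composition of m.m. maps. -/
def mmComp {Λ Λ' : Type} (g : MMmap Λ') (f : MMmap Λ) : MMmap (Λ × (ℕ → Λ')) :=
  fun x pς =>
    ⟨∃ A ∈ f x pς.1, ∀ y ∈ A, (g y (pς.2 y)).Dom,
     fun _ => {z | ∃ A ∈ f x pς.1, ∃ y ∈ A, ∃ B ∈ g y (pς.2 y), z ∈ B}⟩

/-- An m.m. map is inflationary. -/
def MMInflationary {Λ : Type} (U : MMmap Λ) : Prop :=
  ∃ η : ℕ, ∀ x : ℕ, ∃ c ∈ ap η x, ∃ (p : Λ) (B : Set ℕ), B ∈ U c p ∧ B ⊆ {x}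

/-- An m.m. map is idempotent. -/
def MMIdempotent {Λ : Type} (U : MMmap Λ) : Prop :=
  ∃ μ : ℕ, ∀ (x : ℕ) (pς : Λ × (ℕ → Λ)) (A : Set ℕ), A ∈ mmComp U U x pς →
    ∃ c ∈ ap μ x, ∃ (q : Λ) (B : Set ℕ), B ∈ U c q ∧ B ⊆ A

/-- The operation `j_U` on `Ω = 𝒫(ℕ)` induced by an m.m. map `U`. -/
def jMM {Λ : Type} (U : MMmap Λ) (p : Set ℕ) : Set ℕ :=
  {x | ∃ (q : Λ) (A : Set ℕ), A ∈ U x q ∧ A ⊆ p}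

/-- The canonical m.m. map `U_j` induced by an operation `j : Ω → Ω`. -/
def UopMM (j : Set ℕ → Set ℕ) : MMmap (Set ℕ) := fun x p => ⟨x ∈ j p, fun _ => p⟩

/-- for every m.m. map `U`, `j_{U ∘ U} = j_U ∘ j_U`. -/
theorem jMM_comp (Λ : Type) (U : MMmap Λ) :
    jMM (mmComp U U) = fun p => jMM U (jMM U p) := by
  funext p
  ext x
  constructor
  · rintro ⟨⟨q, ς⟩, A, hA, hAp⟩
    obtain ⟨hdom, hval⟩ := hA
    obtain ⟨A', hA', hall⟩ := hdom
    refine ⟨q, A', hA', fun y hy => ?_⟩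
    refine ⟨ς y, (U y (ς y)).get (hall y hy), Part.get_mem _, fun z hz => ?_⟩
    apply hAp
    rw [← hval]
    exact ⟨A', hA', y, hy, (U y (ς y)).get (hall y hy), Part.get_mem _, hz⟩
  · rintro ⟨q, A', hA', hsub⟩
    choose ς B hB hBp using fun (y : A') => hsub y.2
    classical
    set ς' : ℕ → Λ := fun y => if h : y ∈ A' then ς ⟨y, h⟩ else q with hς'
    have hdom : ∃ A ∈ U x q, ∀ y ∈ A, (U y (ς' y)).Dom := by
      refine ⟨A', hA', fun y hy => ?_⟩
      simp only [hς', dif_pos hy]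
      exact Part.dom_iff_mem.mpr ⟨B ⟨y, hy⟩, hB ⟨y, hy⟩⟩
    refine ⟨(q, ς'), _, Part.get_mem hdom, fun z hz => ?_⟩
    obtain ⟨A'', hA'', y, hy, B', hB', hz'⟩ := hz
    have hAA : A'' = A' := Part.mem_unique hA'' hA'
    subst hAA
    have : B' = B ⟨y, hy⟩ := by
      have := hB ⟨y, hy⟩
      simp only [hς', dif_pos hy] at hB'
      exact Part.mem_unique hB' this
    exact hBp ⟨y, hy⟩ (this ▸ hz')

end KleeneOracle
end
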